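/- (Identifiability.) Let D = (V, A) be the directed graph of a finite simple graph G = (V,E). Suppose s₁, s₂ : E → ℝ_{>0} and t₁, t₂ assign positive reals to every proper nonempty subset B ⊊ V, and that for every arc (v→w) ∈ A, s₁(v,w) Π_B (t₁)_B^{u_{v→w}(B)} = s₂(v,w) Π_B (t₂)_B^{u_{v→w}(B)} (i.e., the two parameterizations yield the same values P_{v→w}). Then s₁(e) = s₂(e) for every edge e ∈ E, and Π_B (t₁)_B^{u_a(B)} = Π_B (t₂)_B^{u_a(B)} for every arc a ∈ A. -/

import Mathlib

open Finset

/-!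
Write `m(v,w) = Π_B t_B^{u_{v→w}(B)}`. Reversing an arc negates its cocycle vector, so
`m(w,v) = m(v,w)⁻¹`; by the symmetry of `s` the hypothesis on the arcs `v→w` and `w→v` reads
`s₁ m₁ = s₂ m₂` and `s₁ m₁⁻¹ = s₂ m₂⁻¹`. Multiplying gives `s₁² = s₂²`, hence `s₁ = s₂` by
positivity, and then `m₁ = m₂`.
-/

lemma eq_and_eq_of_mul_eq_of_mul_inv_eq {K : Type*} [Field K] [LinearOrder K]
    [IsStrictOrderedRing K] {a b x y : K} (ha : 0 < a) (hb : 0 < b) (hx : x ≠ 0)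
    (h : a * x = b * y) (h' : a * x⁻¹ = b * y⁻¹) : a = b ∧ x = y := by
  have hy : y ≠ 0 := by
    rintro rfl
    simp [ha.ne', hx] at h
  have hsq : a ^ 2 = b ^ 2 := by
    calc a ^ 2 = (a * x) * (a * x⁻¹) := by field_simp
      _ = (b * y) * (b * y⁻¹) := by rw [h, h']
      _ = b ^ 2 := by field_simp
  have hab : a = b := (sq_eq_sq₀ ha.le hb.le).mp hsq
  exact ⟨hab, mul_left_cancel₀ hb.ne' (hab ▸ h)⟩

section Cocycle

variable {V : Type*} [Fintype V] [DecidableEq V] {K : Type*} [Field K]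

def separatingSets (v w : V) : Finset (Finset V) :=
  univ.filter (fun B : Finset V => B.Nonempty ∧ B ≠ Finset.univ ∧ v ∈ B ∧ w ∉ B)

/-- The monomial `Π_B t_B^{u_{v→w}(B)}`. -/
def cocycleMonomial (t : Finset V → K) (v w : V) : K :=
  (∏ B ∈ separatingSets v w, t B) * (∏ B ∈ separatingSets w v, t B)⁻¹

lemma cocycleMonomial_swap (t : Finset V → K) (v w : V) :
    cocycleMonomial t w v = (cocycleMonomial t v w)⁻¹ := by
  rw [cocycleMonomial, cocycleMonomial, mul_inv, inv_inv, mul_comm]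

lemma cocycleMonomial_ne_zero {t : Finset V → K}
    (ht : ∀ B : Finset V, B.Nonempty → B ≠ Finset.univ → t B ≠ 0) (v w : V) :
    cocycleMonomial t v w ≠ 0 := by
  have hprod : ∀ v w : V, ∏ B ∈ separatingSets v w, t B ≠ 0 := fun v w =>
    prod_ne_zero_iff.mpr fun B hB => by
      obtain ⟨-, hne, huniv, -⟩ := mem_filter.mp hB
      exact ht B hne huniv
  exact mul_ne_zero (hprod v w) (inv_ne_zero (hprod w v))

end Cocycle

theorem stmt_15 {V : Type*} [Fintype V] [DecidableEq V]
    (G : SimpleGraph V)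
    (s₁ s₂ : V → V → ℝ)
    (h₁sym : ∀ v w, s₁ v w = s₁ w v) (h₂sym : ∀ v w, s₂ v w = s₂ w v)
    (h₁pos : ∀ v w, G.Adj v w → 0 < s₁ v w) (h₂pos : ∀ v w, G.Adj v w → 0 < s₂ v w)
    (t₁ t₂ : Finset V → ℝ)
    (ht₁ : ∀ B : Finset V, B.Nonempty → B ≠ Finset.univ → 0 < t₁ B)
    (heq : ∀ v w, G.Adj v w →
      s₁ v w * (∏ B ∈ univ.filter
          (fun B : Finset V => B.Nonempty ∧ B ≠ Finset.univ ∧ v ∈ B ∧ w ∉ B), t₁ B)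
        * (∏ B ∈ univ.filter
          (fun B : Finset V => B.Nonempty ∧ B ≠ Finset.univ ∧ w ∈ B ∧ v ∉ B), t₁ B)⁻¹ =
      s₂ v w * (∏ B ∈ univ.filter
          (fun B : Finset V => B.Nonempty ∧ B ≠ Finset.univ ∧ v ∈ B ∧ w ∉ B), t₂ B)
        * (∏ B ∈ univ.filter
          (fun B : Finset V => B.Nonempty ∧ B ≠ Finset.univ ∧ w ∈ B ∧ v ∉ B), t₂ B)⁻¹) :
    (∀ v w, G.Adj v w → s₁ v w = s₂ v w) ∧
    (∀ v w, G.Adj v w →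
      (∏ B ∈ univ.filter
          (fun B : Finset V => B.Nonempty ∧ B ≠ Finset.univ ∧ v ∈ B ∧ w ∉ B), t₁ B)
        * (∏ B ∈ univ.filter
          (fun B : Finset V => B.Nonempty ∧ B ≠ Finset.univ ∧ w ∈ B ∧ v ∉ B), t₁ B)⁻¹ =
      (∏ B ∈ univ.filter
          (fun B : Finset V => B.Nonempty ∧ B ≠ Finset.univ ∧ v ∈ B ∧ w ∉ B), t₂ B)
        * (∏ B ∈ univ.filter
          (fun B : Finset V => B.Nonempty ∧ B ≠ Finset.univ ∧ w ∈ B ∧ v ∉ B), t₂ B)⁻¹) := by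
  have harc : ∀ v w, G.Adj v w →
      s₁ v w * cocycleMonomial t₁ v w = s₂ v w * cocycleMonomial t₂ v w := fun v w hvw => by
    have h := heq v w hvw
    rw [mul_assoc, mul_assoc] at h
    exact h
  have hedge : ∀ v w, G.Adj v w →
      s₁ v w = s₂ v w ∧ cocycleMonomial t₁ v w = cocycleMonomial t₂ v w := fun v w hvw => by
    have hrev := harc w v hvw.symm
    rw [h₁sym w v, h₂sym w v, cocycleMonomial_swap t₁, cocycleMonomial_swap t₂] at hrev
    exact eq_and_eq_of_mul_eq_of_mul_inv_eq (h₁pos v w hvw) (h₂pos v w hvw)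
      (cocycleMonomial_ne_zero (fun B hne huniv => (ht₁ B hne huniv).ne') v w) (harc v w hvw) hrev
  exact ⟨fun v w hvw => (hedge v w hvw).1, fun v w hvw => (hedge v w hvw).2⟩
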